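/- (Lemma 4, formula (3)) Let E be a real Banach space, x, y ∈ E linearly independent, let [m, M] be the nonempty closed bounded interval {α ∈ ℝ : x + α y ⊥ y}, and let f : ℝ → ℝ be a function such that for almost every t < m (with respect to Lebesgue measure), x + t y is James-orthogonal to x − f(t) y. Then for every α < m, ‖x + α y‖ = ‖x + m y‖ · exp( − ∫_α^m (t + f(t))⁻¹ dt ). -/

import Mathlib

/-!
Along the line `φ t = ‖x + t • y‖`, orthogonality of `x + t • y` to `x - c • y` gives
`φ t * |u + c| ≤ |t + c| * φ u` for all `u`, i.e. `u ↦ log φ u - log |u + c|` is minimal at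
`u = t`. Wherever `φ` is differentiable (almost everywhere, `φ` being Lipschitz) this forces
`φ' t / φ t = (t + c)⁻¹`. As `φ` is convex and positive, `log φ` is the integral of its right
derivative `φ'₊ / φ`, which agrees almost everywhere with `(t + f t)⁻¹` on `(α, m)`.
-/

open MeasureTheory Set

/-- James orthogonality: `x ⊥ y` iff `‖x + α • y‖ ≥ ‖x‖` for every real `α`. -/
def JamesOrth {E : Type*} [NormedAddCommGroup E] [NormedSpace ℝ E] (x y : E) : Prop :=
  ∀ α : ℝ, ‖x‖ ≤ ‖x + α • y‖

theorem ConvexOn.integral_rightDeriv_div_eq_log_sub {φ : ℝ → ℝ} (hφ : ConvexOn ℝ univ φ)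
    {a b : ℝ} (hab : a ≤ b) (hpos : ∀ t ∈ Icc a b, 0 < φ t) :
    ∫ t in a..b, derivWithin φ (Ioi t) t / φ t = Real.log (φ b) - Real.log (φ a) := by
  have hcont : ContinuousOn φ (Icc a b) :=
    (hφ.continuousOn isOpen_univ).mono (subset_univ _)
  have hrd (t : ℝ) : HasDerivWithinAt φ (derivWithin φ (Ioi t) t) (Ioi t) t :=
    hφ.hasDerivWithinAt_rightDeriv_of_mem_interior (by simp)
  have hmono : Monotone fun t => derivWithin φ (Ioi t) t := by
    simpa using hφ.monotoneOn_rightDeriv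
  refine intervalIntegral.integral_eq_sub_of_hasDeriv_right_of_le hab
    (hcont.log fun t ht => (hpos t ht).ne')
    (fun t ht => (hrd t).log (hpos t (Ioo_subset_Icc_self ht)).ne') ?_
  simpa only [div_eq_mul_inv] using hmono.intervalIntegrable.mul_continuousOn
    (by rw [uIcc_of_le hab]; exact hcont.inv₀ fun t ht => (hpos t ht).ne')

section

variable {E : Type*} [NormedAddCommGroup E] [NormedSpace ℝ E]

theorem convexOn_norm_add_smul (x y : E) : ConvexOn ℝ univ fun t : ℝ => ‖x + t • y‖ := by
  have := (convexOn_norm (convex_univ (𝕜 := ℝ) (E := E))).comp_affineMap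
    (AffineMap.lineMap (k := ℝ) x (x + y))
  simpa [Function.comp_def, AffineMap.lineMap_apply, add_comm] using this

theorem lipschitzWith_norm_add_smul (x y : E) : LipschitzWith ‖y‖₊ fun t : ℝ => ‖x + t • y‖ := by
  refine LipschitzWith.of_dist_le_mul fun s t => ?_
  calc dist ‖x + s • y‖ ‖x + t • y‖ ≤ ‖(x + s • y) - (x + t • y)‖ := dist_norm_norm_le _ _
    _ = ‖y‖ * dist s t := by
      rw [add_sub_add_left_eq_sub, ← sub_smul, norm_smul, Real.dist_eq, Real.norm_eq_abs, mul_comm]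

theorem LinearIndependent.add_smul_ne_zero {x y : E} (hxy : LinearIndependent ℝ ![x, y]) (t : ℝ) :
    x + t • y ≠ 0 := by
  intro h
  exact one_ne_zero (LinearIndependent.pair_iff.1 hxy 1 t (by rwa [one_smul])).1

theorem JamesOrth.norm_mul_abs_le {x y : E} {t c : ℝ} (h : JamesOrth (x + t • y) (x - c • y))
    (u : ℝ) : ‖x + t • y‖ * |u + c| ≤ |t + c| * ‖x + u • y‖ := by
  rcases eq_or_ne (u + c) 0 with huc | huc
  · rw [huc, abs_zero, mul_zero]
    positivity
  have hcomb : x + t • y + ((t - u) / (u + c)) • (x - c • y) =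
      ((t + c) / (u + c)) • (x + u • y) := by
    match_scalars <;> field_simp <;> ring
  have horth := h ((t - u) / (u + c))
  rw [hcomb, norm_smul, Real.norm_eq_abs, abs_div] at horth
  have hpos : 0 < |u + c| := abs_pos.2 huc
  calc ‖x + t • y‖ * |u + c| ≤ |t + c| / |u + c| * ‖x + u • y‖ * |u + c| := by gcongr
    _ = |t + c| * ‖x + u • y‖ := by field_simp

theorem JamesOrth.div_norm_eq_inv_of_hasDerivAt {x y : E} {t c d : ℝ}
    (h : JamesOrth (x + t • y) (x - c • y)) (hne : x + t • y ≠ 0)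
    (hd : HasDerivAt (fun u : ℝ => ‖x + u • y‖) d t) : d / ‖x + t • y‖ = (t + c)⁻¹ := by
  have hnorm : 0 < ‖x + t • y‖ := norm_pos_iff.2 hne
  have htc : t + c ≠ 0 := by
    intro htc
    have hle := h.norm_mul_abs_le (1 - c)
    rw [htc, sub_add_cancel, abs_one, abs_zero, mul_one, zero_mul] at hle
    exact hnorm.not_ge hle
  -- `Real.log` is even, so `log (u + c) = log |u + c|` and the inequality becomes a local minimum.
  have hmin : IsLocalMin (fun u : ℝ => Real.log ‖x + u • y‖ - Real.log (u + c)) t := by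
    filter_upwards [(continuous_add_const c).continuousAt.eventually_ne htc] with u huc
    have hle := h.norm_mul_abs_le u
    have hprod : 0 < ‖x + t • y‖ * |u + c| := by positivity
    have hlog := Real.log_le_log hprod hle
    rw [Real.log_mul hnorm.ne' (abs_ne_zero.2 huc),
      Real.log_mul (abs_ne_zero.2 htc) (pos_of_mul_pos_right (hprod.trans_le hle)
        (abs_nonneg _)).ne', Real.log_abs, Real.log_abs] at hlog
    linarith
  have hderiv := (hd.log hnorm.ne').sub ((hasDerivAt_id t).add_const c |>.log htc)
  simpa [sub_eq_zero, one_div] using hmin.hasDerivAt_eq_zero hderiv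

end

theorem norm_formula_left_of_m_general
    {E : Type*} [NormedAddCommGroup E] [NormedSpace ℝ E]
    (x y : E) (hxy : LinearIndependent ℝ ![x, y]) (m : ℝ)
    (f : ℝ → ℝ)
    (hf : ∀ᵐ t ∂(volume : Measure ℝ), t < m → JamesOrth (x + t • y) (x - f t • y)) :
    ∀ α : ℝ, α < m →
      ‖x + α • y‖ = ‖x + m • y‖ * Real.exp (-∫ t in α..m, (t + f t)⁻¹) := by
  intro α hαm
  set φ : ℝ → ℝ := fun t => ‖x + t • y‖
  have hpos (t : ℝ) : 0 < φ t := norm_pos_iff.2 (hxy.add_smul_ne_zero t)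
  have hintegrand : ∀ᵐ t, t ∈ uIoc α m → (t + f t)⁻¹ = derivWithin φ (Ioi t) t / φ t := by
    filter_upwards [hf, (lipschitzWith_norm_add_smul x y).ae_differentiableAt_real,
      volume.ae_ne m] with t hft hdiff htm' ht
    have htm : t < m := lt_of_le_of_ne (uIoc_of_le hαm.le ▸ ht).2 htm'
    rw [hdiff.hasDerivAt.hasDerivWithinAt.derivWithin (uniqueDiffWithinAt_Ioi t)]
    exact ((hft htm).div_norm_eq_inv_of_hasDerivAt (hxy.add_smul_ne_zero t) hdiff.hasDerivAt).symm
  have hlog : ∫ t in α..m, (t + f t)⁻¹ = Real.log (φ m) - Real.log (φ α) :=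
    (intervalIntegral.integral_congr_ae hintegrand).trans
      ((convexOn_norm_add_smul x y).integral_rightDeriv_div_eq_log_sub hαm.le fun t _ => hpos t)
  rw [hlog, neg_sub, Real.exp_sub, Real.exp_log (hpos α), Real.exp_log (hpos m),
    mul_div_cancel₀ _ (hpos m).ne']

theorem norm_formula_left_of_m
    {E : Type*} [NormedAddCommGroup E] [NormedSpace ℝ E] [CompleteSpace E]
    (x y : E) (hxy : LinearIndependent ℝ ![x, y]) (m M : ℝ) (hmM : m ≤ M)
    (hIcc : {α : ℝ | JamesOrth (x + α • y) y} = Set.Icc m M)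
    (f : ℝ → ℝ)
    (hf : ∀ᵐ t ∂(volume : Measure ℝ), t < m → JamesOrth (x + t • y) (x - f t • y)) :
    ∀ α : ℝ, α < m →
      ‖x + α • y‖ = ‖x + m • y‖ * Real.exp (-∫ t in α..m, (t + f t)⁻¹) :=
  norm_formula_left_of_m_general x y hxy m f hf
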